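/- arXiv:2509.20167 — 3 statements merged into one kernel-verified Lean document; each statement's English description precedes it below -/
import Mathlib

section
/- Let f : ℂ → ℂ be continuous and M > 0 with f(z) ≠ 0 for all |z| ≥ M. Define G : ℂ × [0,1] → ℂ by G(z,t) = f(z) for |z| < M, and G(z,t) = |f(z)| · f(t·Mz/|z| + (1−t)z) / |f(t·Mz/|z| + (1−t)z)| for |z| ≥ M. Then G is well defined and continuous, G(z,0) = f(z) for all z, |G(z,t)| = |f(z)| for all z ∈ ℂ and t ∈ [0,1], and for |z| ≥ M the argument of G(z,1) equals the argument of f(M·z/|z|). -/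
open Complex unitInterval

lemma radial_key (M : ℝ) (hM : 0 < M) (z : ℂ) (hz : M ≤ ‖z‖) (t : ℝ) (ht0 : 0 ≤ t)
    (ht1 : t ≤ 1) :
    M ≤ ‖((t : ℝ) : ℂ) * ((M : ℂ) * z / (‖z‖ : ℂ)) + ((1 : ℂ) - ((t : ℝ) : ℂ)) * z‖ := by
  have hz0 : (0 : ℝ) < ‖z‖ := lt_of_lt_of_le hM hz
  have hz0' : (‖z‖ : ℂ) ≠ 0 := by
    simpa using ne_of_gt hz0
  have heq : ((t : ℝ) : ℂ) * ((M : ℂ) * z / (‖z‖ : ℂ)) + ((1 : ℂ) - ((t : ℝ) : ℂ)) * z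
      = (((t * M / ‖z‖ + (1 - t)) : ℝ) : ℂ) * z := by
    push_cast
    field_simp
  have hc : (0 : ℝ) ≤ t * M / ‖z‖ + (1 - t) := by
    have : 0 ≤ t * M / ‖z‖ := by positivity
    linarith
  rw [heq, norm_mul, Complex.norm_real, Real.norm_eq_abs, _root_.abs_of_nonneg hc]
  have hzr : ‖z‖ ≠ 0 := ne_of_gt hz0
  have hza : ‖z‖ ≠ 0 := hzr
  have : (t * M / ‖z‖ + (1 - t)) * ‖z‖ = t * M + (1 - t) * ‖z‖ := by
    field_simp
  rw [this]
  nlinarith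

/-- **The radial homotopy `G`.**  Let `f : ℂ → ℂ` be continuous, `M > 0`, with `f(z) ≠ 0`
for all `|z| ≥ M`.  Define `G(z,t) = f(z)` for `|z| < M` and
`G(z,t) = |f(z)| · f(t·Mz/|z| + (1−t)z) / |f(t·Mz/|z| + (1−t)z)|` for `|z| ≥ M`.
Then `G` is well defined (the inner value `f(t·Mz/|z| + (1−t)z)` never vanishes for
`|z| ≥ M`), continuous on `ℂ × [0,1]`, `G(z,0) = f(z)`, `|G(z,t)| = |f(z)|` for all `z, t`,
and for `|z| ≥ M` the argument of `G(z,1)` equals the argument of `f(M·z/|z|)`. -/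
theorem radial_homotopy_properties
    (f : ℂ → ℂ) (hf : Continuous f) (M : ℝ) (hM : 0 < M)
    (hfM : ∀ z : ℂ, M ≤ ‖z‖ → f z ≠ 0)
    (G : ℂ × I → ℂ)
    (hGlt : ∀ z : ℂ, ∀ t : I, ‖z‖ < M → G (z, t) = f z)
    (hGge : ∀ z : ℂ, ∀ t : I, M ≤ ‖z‖ →
      G (z, t) = (‖f z‖ : ℂ) *
          f (((t : ℝ) : ℂ) * ((M : ℂ) * z / (‖z‖ : ℂ)) + ((1 : ℂ) - ((t : ℝ) : ℂ)) * z) /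
          (‖f (((t : ℝ) : ℂ) * ((M : ℂ) * z / (‖z‖ : ℂ)) + ((1 : ℂ) - ((t : ℝ) : ℂ)) * z)‖ : ℂ)) :
    (∀ z : ℂ, ∀ t : I, M ≤ ‖z‖ →
        f (((t : ℝ) : ℂ) * ((M : ℂ) * z / (‖z‖ : ℂ)) + ((1 : ℂ) - ((t : ℝ) : ℂ)) * z) ≠ 0) ∧
    Continuous G ∧
    (∀ z : ℂ, G (z, 0) = f z) ∧
    (∀ z : ℂ, ∀ t : I, ‖G (z, t)‖ = ‖f z‖) ∧
    (∀ z : ℂ, M ≤ ‖z‖ → (G (z, 1)).arg = (f ((M : ℂ) * z / (‖z‖ : ℂ))).arg) := by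
  -- the inner point never vanishes
  have hwd : ∀ z : ℂ, ∀ t : I, M ≤ ‖z‖ →
      f (((t : ℝ) : ℂ) * ((M : ℂ) * z / (‖z‖ : ℂ)) + ((1 : ℂ) - ((t : ℝ) : ℂ)) * z) ≠ 0 := by
    intro z t hz
    exact hfM _ (radial_key M hM z hz t t.2.1 t.2.2)
  -- on the boundary ‖z‖ = M the two formulas agree
  have hbd : ∀ z : ℂ, ∀ t : I, ‖z‖ = M →
      ((t : ℝ) : ℂ) * ((M : ℂ) * z / (‖z‖ : ℂ)) + ((1 : ℂ) - ((t : ℝ) : ℂ)) * z = z := by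
    intro z t hz
    rw [hz]
    have hM0 : (M : ℂ) ≠ 0 := by simpa using ne_of_gt hM
    field_simp
    ring
  have hGeqf : ∀ z : ℂ, ∀ t : I, ‖z‖ = M → G (z, t) = f z := by
    intro z t hz
    rw [hGge z t hz.ge, hbd z t hz]
    have hfz : f z ≠ 0 := hfM z hz.ge
    have hn : (‖f z‖ : ℂ) ≠ 0 := by
      simpa [Complex.ofReal_ne_zero] using norm_ne_zero_iff.mpr hfz
    rw [mul_comm, mul_div_assoc, div_self hn, mul_one]
  refine ⟨hwd, ?_, ?_, ?_, ?_⟩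
  · -- continuity
    classical
    set F₂ : ℂ × I → ℂ := fun p => (‖f p.1‖ : ℂ) *
        f (((p.2 : ℝ) : ℂ) * ((M : ℂ) * p.1 / (‖p.1‖ : ℂ)) + ((1 : ℂ) - ((p.2 : ℝ) : ℂ)) * p.1) /
        (‖f (((p.2 : ℝ) : ℂ) * ((M : ℂ) * p.1 / (‖p.1‖ : ℂ)) +
          ((1 : ℂ) - ((p.2 : ℝ) : ℂ)) * p.1)‖ : ℂ) with hF₂
    have hF₂eq : ∀ p : ℂ × I, ‖p.1‖ = M → F₂ p = f p.1 := by
      intro p hp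
      rw [hF₂]
      simp only
      rw [hbd p.1 p.2 hp]
      have hfz : f p.1 ≠ 0 := hfM p.1 hp.ge
      have hn : (‖f p.1‖ : ℂ) ≠ 0 := by
        simpa [Complex.ofReal_ne_zero] using norm_ne_zero_iff.mpr hfz
      rw [mul_comm, mul_div_assoc, div_self hn, mul_one]
    have hGeq : G = fun p : ℂ × I => if ‖p.1‖ < M then f p.1 else F₂ p := by
      funext p
      by_cases h : ‖p.1‖ < M
      · rw [if_pos h]
        obtain ⟨z, t⟩ := p
        exact hGlt z t h
      · rw [if_neg h]
        obtain ⟨z, t⟩ := p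
        exact hGge z t (not_lt.mp h)
    rw [hGeq]
    have hsopen : IsOpen {x : ℂ × I | ‖x.1‖ < M} :=
      isOpen_lt (continuous_norm.comp continuous_fst) continuous_const
    have hccl : IsClosed {x : ℂ × I | ‖x.1‖ < M}ᶜ := hsopen.isClosed_compl
    have hF₂cont : ContinuousOn F₂ {x : ℂ × I | M ≤ ‖x.1‖} := by
      have hz0 : ∀ p : ℂ × I, p ∈ {x : ℂ × I | M ≤ ‖x.1‖} → (‖p.1‖ : ℂ) ≠ 0 := by
        intro p hp
        simpa [Complex.ofReal_ne_zero] using ne_of_gt (lt_of_lt_of_le hM hp)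
      have c1 : Continuous fun p : ℂ × I => ((p.2 : ℝ) : ℂ) :=
        Complex.continuous_ofReal.comp (continuous_subtype_val.comp continuous_snd)
      have c2 : ContinuousOn (fun p : ℂ × I => (M : ℂ) * p.1 / (‖p.1‖ : ℂ))
          {x : ℂ × I | M ≤ ‖x.1‖} :=
        (continuous_const.mul continuous_fst).continuousOn.div
          ((Complex.continuous_ofReal.comp (continuous_norm.comp continuous_fst)).continuousOn)
          hz0
      have hwcont : ContinuousOn
          (fun p : ℂ × I => ((p.2 : ℝ) : ℂ) * ((M : ℂ) * p.1 / (‖p.1‖ : ℂ)) +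
            ((1 : ℂ) - ((p.2 : ℝ) : ℂ)) * p.1) {x : ℂ × I | M ≤ ‖x.1‖} :=
        (c1.continuousOn.mul c2).add
          ((continuous_const.sub c1).continuousOn.mul continuous_fst.continuousOn)
      have hfw : ContinuousOn
          (fun p : ℂ × I => f (((p.2 : ℝ) : ℂ) * ((M : ℂ) * p.1 / (‖p.1‖ : ℂ)) +
            ((1 : ℂ) - ((p.2 : ℝ) : ℂ)) * p.1)) {x : ℂ × I | M ≤ ‖x.1‖} :=
        hf.comp_continuousOn hwcont
      apply ContinuousOn.div
      · exact ((Complex.continuous_ofReal.comp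
          ((hf.comp continuous_fst).norm)).continuousOn).mul hfw
      · exact Complex.continuous_ofReal.comp_continuousOn hfw.norm
      · intro p hp
        simpa [Complex.ofReal_ne_zero] using norm_ne_zero_iff.mpr (hwd p.1 p.2 hp)
    apply continuous_if
    · -- frontier condition
      intro p hp
      have h1 : p ∈ closure {x : ℂ × I | ‖x.1‖ < M} := hp.1
      have hle : ‖p.1‖ ≤ M := by
        have hsub : closure {x : ℂ × I | ‖x.1‖ < M} ⊆ {x : ℂ × I | ‖x.1‖ ≤ M} :=
          closure_minimal (fun x hx => show ‖x.1‖ ≤ M from le_of_lt hx)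
            (isClosed_le (continuous_norm.comp continuous_fst) continuous_const)
        exact hsub h1
      have hge : M ≤ ‖p.1‖ := by
        by_contra hlt
        exact hp.2 (mem_interior_iff_mem_nhds.mpr (hsopen.mem_nhds (not_le.mp hlt)))
      exact (hF₂eq p (le_antisymm hle hge)).symm
    · exact (hf.comp continuous_fst).continuousOn
    · apply hF₂cont.mono
      apply closure_minimal
      · intro x hx
        exact not_lt.mp hx
      · exact isClosed_le continuous_const (continuous_norm.comp continuous_fst)
  · -- G(z,0) = f z
    intro z
    by_cases h : ‖z‖ < M
    · exact hGlt z 0 h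
    · have hz := not_lt.mp h
      rw [hGge z 0 hz]
      simp only [Set.Icc.coe_zero, Complex.ofReal_zero, zero_mul, sub_zero, one_mul, zero_add]
      have hfz : f z ≠ 0 := hfM z hz
      have hn : (‖f z‖ : ℂ) ≠ 0 := by
        simpa [Complex.ofReal_ne_zero] using norm_ne_zero_iff.mpr hfz
      rw [mul_comm, mul_div_assoc, div_self hn, mul_one]
  · -- norms
    intro z t
    by_cases h : ‖z‖ < M
    · rw [hGlt z t h]
    · have hz := not_lt.mp h
      rw [hGge z t hz]
      have hw := hwd z t hz
      rw [norm_div, norm_mul, Complex.norm_real, Complex.norm_real, Real.norm_eq_abs,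
        Real.norm_eq_abs, abs_norm, abs_norm,
        mul_div_assoc, div_self (norm_ne_zero_iff.mpr hw), mul_one]
  · -- arg at t = 1
    intro z hz
    rw [hGge z 1 hz]
    simp only [Set.Icc.coe_one, Complex.ofReal_one, one_mul, sub_self, zero_mul, add_zero]
    set w := f ((M : ℂ) * z / (‖z‖ : ℂ)) with hw
    have hw0 : w ≠ 0 := by
      have := hwd z 1 hz
      simpa using this
    have hr : (0 : ℝ) < ‖f z‖ / ‖w‖ :=
      div_pos (norm_pos_iff.mpr (hfM z hz)) (norm_pos_iff.mpr hw0)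
    have : (‖f z‖ : ℂ) * w / (‖w‖ : ℂ) = ((‖f z‖ / ‖w‖ : ℝ) : ℂ) * w := by
      push_cast
      ring
    rw [this, Complex.arg_real_mul w hr]
end

section
/- Let f, g : ℂ → ℂ be continuous functions with no common zeros, with f(z)/g(z) → ∞ as |z| → ∞ and f(z) ≠ 0 for all |z| ≥ M for some M > 0. Define f₁ : ℂ → ℂ by f₁(z) = f(z) for |z| < M and f₁(z) = |f(z)| · f(Mz/|z|)/|f(Mz/|z|)| for |z| ≥ M. Then f₁ is continuous, |f₁(z)| = |f(z)| for all z, f₁ and g have no common zeros, and the continuous maps R = f/g and R₁ = f₁/g of the Riemann sphere ℂ̄ to itself (each defined to be ∞ where its denominator vanishes and at z = ∞) are homotopic; in particular they have the same degree. -/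
open Complex Topology unitInterval Filter OnePoint
open scoped OnePoint

/-- The standard map of degree `n` on the Riemann sphere `ℂ̄ = ℂ ∪ {∞}`
(identified with `S²` via stereographic projection): for `n > 0` it is `z ↦ zⁿ`,
for `n = 0` the constant map `1`, and for `n < 0` it is `z ↦ (conj z)^(-n)`,
each sending `∞ ↦ ∞` (for `n ≠ 0`). -/
noncomputable def stdSphereMap (n : ℤ) : OnePoint ℂ → OnePoint ℂ := fun z =>
  OnePoint.rec (if n = 0 then ((1 : ℂ) : OnePoint ℂ) else (∞ : OnePoint ℂ))
    (fun w =>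
      if n = 0 then ((1 : ℂ) : OnePoint ℂ)
      else if 0 < n then ((w ^ n.toNat : ℂ) : OnePoint ℂ)
      else (((starRingEnd ℂ) w ^ (-n).toNat : ℂ) : OnePoint ℂ)) z

/-- `R : ℂ̄ → ℂ̄` has topological degree `n`: by Hopf's theorem this holds iff `R` is
(freely) homotopic to the standard degree-`n` map; the degree is the integer corresponding
to the homotopy class of `R` under `π₂(S²) ≅ ℤ`, the identity map having degree `1`. -/
def HasDegree (R : OnePoint ℂ → OnePoint ℂ) (n : ℤ) : Prop :=
  ∃ H : OnePoint ℂ × I → OnePoint ℂ, Continuous H ∧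
    (∀ z, H (z, 0) = R z) ∧ (∀ z, H (z, 1) = stdSphereMap n z)

/-- Free homotopy of self-maps of the Riemann sphere, in the elementary form used above. -/
def SphereHomotopic (A B : OnePoint ℂ → OnePoint ℂ) : Prop :=
  ∃ H : OnePoint ℂ × I → OnePoint ℂ, Continuous H ∧
    (∀ z, H (z, 0) = A z) ∧ (∀ z, H (z, 1) = B z)

lemma SphereHomotopic.symm {A B : OnePoint ℂ → OnePoint ℂ}
    (h : SphereHomotopic A B) : SphereHomotopic B A := by
  obtain ⟨H, hH, h0, h1⟩ := h
  refine ⟨fun p => H (p.1, unitInterval.symm p.2),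
    hH.comp (continuous_fst.prodMk (unitInterval.continuous_symm.comp continuous_snd)),
    fun z => ?_, fun z => ?_⟩
  · simp only [unitInterval.symm_zero]; exact h1 z
  · simp only [unitInterval.symm_one]; exact h0 z

lemma SphereHomotopic.trans {A B C : OnePoint ℂ → OnePoint ℂ}
    (hAB : SphereHomotopic A B) (hBC : SphereHomotopic B C) : SphereHomotopic A C := by
  obtain ⟨H₁, hH₁, h10, h11⟩ := hAB
  obtain ⟨H₂, hH₂, h20, h21⟩ := hBC
  set prj : ℝ → I := Set.projIcc 0 1 zero_le_one with hprj
  have hprjc : Continuous prj := continuous_projIcc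
  have hprj0 : prj 0 = 0 := by simp [hprj, Set.projIcc]
  have hprj1 : prj 1 = 1 := by simp [hprj, Set.projIcc]
  refine ⟨fun p => if (p.2 : ℝ) ≤ 1/2 then H₁ (p.1, prj (2 * p.2)) else H₂ (p.1, prj (2 * p.2 - 1)),
    ?_, fun z => ?_, fun z => ?_⟩
  · apply Continuous.if_le
    · exact hH₁.comp (continuous_fst.prodMk (hprjc.comp (by continuity)))
    · exact hH₂.comp (continuous_fst.prodMk (hprjc.comp (by continuity)))
    · exact continuous_subtype_val.comp continuous_snd
    · exact continuous_const
    · intro p hp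
      have h2 : (2 : ℝ) * p.2 = 1 := by rw [hp]; norm_num
      rw [h2]
      norm_num [hprj0, hprj1]
      rw [h11, h20]
  · norm_num [hprj0, h10]
  · norm_num [hprj1, h21]

lemma aux_tendsto_infty {α : Type*} {l : Filter α} {h : α → OnePoint ℂ}
    (hc : ∀ C : ℝ, ∀ᶠ x in l, ∀ w : ℂ, h x = (w : OnePoint ℂ) → C ≤ ‖w‖) :
    Tendsto h l (𝓝 (∞ : OnePoint ℂ)) := by
  rw [OnePoint.hasBasis_nhds_infty.tendsto_right_iff]
  rintro K ⟨hKc, hK⟩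
  obtain ⟨C, hC⟩ := hK.isBounded.exists_norm_le
  filter_upwards [hc (C + 1)] with x hx
  by_cases hxi : h x = ∞
  · exact Or.inr (by simp [hxi])
  · obtain ⟨w, hw⟩ := OnePoint.ne_infty_iff_exists.mp hxi
    have hCw := hx w hw.symm
    exact Or.inl ⟨w, fun hwK => by linarith [hC w hwK], hw⟩

/-- **Radial straightening preserves the degree.**  Let `f, g : ℂ → ℂ` be continuous
with no common zeros, `f(z)/g(z) → ∞` as `|z| → ∞`, and `f(z) ≠ 0` for `|z| ≥ M`
(`M > 0`).  Let `f₁(z) = f(z)` for `|z| < M` and `f₁(z) = |f(z)|·f(Mz/|z|)/|f(Mz/|z|)|`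
for `|z| ≥ M`.  Then `f₁` is continuous, `|f₁| = |f|`, `f₁` and `g` have no common
zeros, and the continuous maps `R = f/g` and `R₁ = f₁/g` of the Riemann sphere
(equal to `∞` where the denominator vanishes and at `∞`) are homotopic; in particular
they have the same degree. -/
theorem straightened_map_same_degree
    (f g : ℂ → ℂ) (hf : Continuous f) (hg : Continuous g)
    (hfg : ∀ z : ℂ, ¬(f z = 0 ∧ g z = 0))
    (hlim : ∀ C : ℝ, 0 < C → ∃ r : ℝ, 0 < r ∧ ∀ z : ℂ, r ≤ ‖z‖ → C * ‖g z‖ ≤ ‖f z‖)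
    (M : ℝ) (hM : 0 < M) (hfM : ∀ z : ℂ, M ≤ ‖z‖ → f z ≠ 0)
    (f₁ : ℂ → ℂ)
    (hf₁lt : ∀ z : ℂ, ‖z‖ < M → f₁ z = f z)
    (hf₁ge : ∀ z : ℂ, M ≤ ‖z‖ →
      f₁ z = (‖f z‖ : ℂ) * f ((M : ℂ) * z / (‖z‖ : ℂ)) / (‖f ((M : ℂ) * z / (‖z‖ : ℂ))‖ : ℂ))
    (R R₁ : OnePoint ℂ → OnePoint ℂ) (hRcont : Continuous R) (hR₁cont : Continuous R₁)
    (hRa : ∀ z : ℂ, g z ≠ 0 → R z = ((f z / g z : ℂ) : OnePoint ℂ))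
    (hRb : ∀ z : ℂ, g z = 0 → R z = ∞) (hRinf : R ∞ = ∞)
    (hR₁a : ∀ z : ℂ, g z ≠ 0 → R₁ z = ((f₁ z / g z : ℂ) : OnePoint ℂ))
    (hR₁b : ∀ z : ℂ, g z = 0 → R₁ z = ∞) (hR₁inf : R₁ ∞ = ∞) :
    Continuous f₁ ∧
    (∀ z : ℂ, ‖f₁ z‖ = ‖f z‖) ∧
    (∀ z : ℂ, ¬(f₁ z = 0 ∧ g z = 0)) ∧
    (∃ H : OnePoint ℂ × I → OnePoint ℂ, Continuous H ∧
      (∀ z, H (z, 0) = R z) ∧ (∀ z, H (z, 1) = R₁ z)) ∧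
    (∀ n : ℤ, HasDegree R n ↔ HasDegree R₁ n) := by
  classical
  -- the radial retraction
  set ρ : ℂ × I → ℂ := fun p =>
    ((((1 - (p.2 : ℝ)) * ‖p.1‖ + (p.2 : ℝ) * M : ℝ) : ℂ)) * p.1 / ((‖p.1‖ : ℝ) : ℂ) with hρdef
  have hsc : ∀ p : ℂ × I, M ≤ ‖p.1‖ → M ≤ (1 - (p.2 : ℝ)) * ‖p.1‖ + (p.2 : ℝ) * M := by
    intro p hp
    nlinarith [p.2.2.1, p.2.2.2]
  have hρnorm : ∀ p : ℂ × I, M ≤ ‖p.1‖ →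
      ‖ρ p‖ = (1 - (p.2 : ℝ)) * ‖p.1‖ + (p.2 : ℝ) * M := by
    intro p hp
    have hz0 : ‖p.1‖ ≠ 0 := ne_of_gt (lt_of_lt_of_le hM hp)
    have hs0 : (0 : ℝ) ≤ (1 - (p.2 : ℝ)) * ‖p.1‖ + (p.2 : ℝ) * M := le_trans hM.le (hsc p hp)
    rw [hρdef]
    simp only [norm_div, norm_mul, Complex.norm_real, Real.norm_eq_abs]
    rw [_root_.abs_of_nonneg hs0, _root_.abs_of_nonneg (norm_nonneg _),
      mul_div_assoc, div_self hz0, mul_one]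
  have hρM : ∀ p : ℂ × I, M ≤ ‖p.1‖ → M ≤ ‖ρ p‖ := by
    intro p hp; rw [hρnorm p hp]; exact hsc p hp
  have hρbd : ∀ p : ℂ × I, ‖p.1‖ = M → ρ p = p.1 := by
    intro p hp
    have hMc : ((M : ℝ) : ℂ) ≠ 0 := by
      exact_mod_cast ne_of_gt hM
    have h1 : ((1 - (p.2 : ℝ)) * M + (p.2 : ℝ) * M : ℝ) = M := by ring
    rw [hρdef]
    simp only [hp, h1]
    exact mul_div_cancel_left₀ _ hMc
  -- the interpolating family
  set F : ℂ × I → ℂ := fun p =>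
    if ‖p.1‖ ≤ M then f p.1
    else (‖f p.1‖ : ℂ) * f (ρ p) / ((‖f (ρ p)‖ : ℝ) : ℂ) with hFdef
  have hcancel : ∀ w : ℂ, w ≠ 0 → (‖w‖ : ℂ) * w / ((‖w‖ : ℝ) : ℂ) = w := by
    intro w hw
    have : ((‖w‖ : ℝ) : ℂ) ≠ 0 := by
      simpa using hw
    exact mul_div_cancel_left₀ _ this
  have hbr2 : ∀ p : ℂ × I, ‖p.1‖ = M →
      (‖f p.1‖ : ℂ) * f (ρ p) / ((‖f (ρ p)‖ : ℝ) : ℂ) = f p.1 := by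
    intro p hp
    rw [hρbd p hp]
    exact hcancel _ (hfM _ hp.ge)
  have hFnorm : ∀ p : ℂ × I, ‖F p‖ = ‖f p.1‖ := by
    intro p
    by_cases h : ‖p.1‖ ≤ M
    · simp only [hFdef]
      rw [if_pos h]
    · push_neg at h
      have hρ0 : f (ρ p) ≠ 0 := hfM _ (hρM p h.le)
      have hρ0' : ‖f (ρ p)‖ ≠ 0 := norm_ne_zero_iff.mpr hρ0
      simp only [hFdef]
      rw [if_neg (not_le.mpr h), norm_div, norm_mul, Complex.norm_real,
        Complex.norm_real, norm_norm, norm_norm, mul_div_assoc, div_self hρ0', mul_one]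
  have hF0 : ∀ z : ℂ, F (z, 0) = f z := by
    intro z
    by_cases h : ‖z‖ ≤ M
    · simp only [hFdef]
      rw [if_pos h]
    · push_neg at h
      have hz0 : ‖z‖ ≠ 0 := ne_of_gt (lt_trans hM h)
      have h1 : ρ (z, (0 : I)) = z := by
        rw [hρdef]
        have : ((1 - ((0 : I) : ℝ)) * ‖z‖ + ((0 : I) : ℝ) * M : ℝ) = ‖z‖ := by
          norm_num
        simp only [this]
        exact mul_div_cancel_left₀ _ (by exact_mod_cast hz0)
      simp only [hFdef]
      rw [if_neg (not_le.mpr h), h1]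
      exact hcancel _ (hfM _ h.le)
  have hF1 : ∀ z : ℂ, F (z, 1) = f₁ z := by
    intro z
    rcases lt_trichotomy ‖z‖ M with h | h | h
    · simp only [hFdef]
      rw [if_pos h.le]
      exact (hf₁lt z h).symm
    · have h1 : ρ (z, (1 : I)) = z := hρbd (z, (1 : I)) h
      have hfz : f z ≠ 0 := hfM _ h.ge
      simp only [hFdef]
      rw [if_pos h.le, hf₁ge z h.ge]
      have h2 : ((M : ℝ) : ℂ) * z / ((‖z‖ : ℝ) : ℂ) = z := by
        rw [h]
        exact mul_div_cancel_left₀ _ (by exact_mod_cast ne_of_gt hM)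
      rw [h2]
      exact (hcancel _ hfz).symm
    · have h1 : ρ (z, (1 : I)) = ((M : ℝ) : ℂ) * z / ((‖z‖ : ℝ) : ℂ) := by
        rw [hρdef]
        have : ((1 - ((1 : I) : ℝ)) * ‖z‖ + ((1 : I) : ℝ) * M : ℝ) = M := by norm_num
        simp only [this]
      simp only [hFdef]
      rw [if_neg (not_le.mpr h), h1]
      exact (hf₁ge z h.le).symm
  have hFcont : Continuous F := by
    rw [hFdef]
    apply continuous_if
    · intro a ha
      have hae : ‖a.1‖ = M := by
        have := frontier_le_subset_eq (α := ℝ)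
          (f := fun p : ℂ × I => ‖p.1‖) (g := fun _ => M)
          (continuous_fst.norm) continuous_const ha
        exact this
      exact (hbr2 a hae).symm
    · exact (hf.comp continuous_fst).continuousOn
    · have hsub : closure {p : ℂ × I | ¬‖p.1‖ ≤ M} ⊆ {p : ℂ × I | M ≤ ‖p.1‖} := by
        have he : {p : ℂ × I | ¬‖p.1‖ ≤ M} = {p : ℂ × I | M < ‖p.1‖} := by
          ext p; simp [not_le]
        rw [he]
        exact closure_lt_subset_le continuous_const (continuous_fst.norm)
      apply ContinuousOn.mono _ hsub
      have hρcont : ContinuousOn ρ {p : ℂ × I | M ≤ ‖p.1‖} := by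
        apply ContinuousOn.div
        · apply Continuous.continuousOn
          exact (Complex.continuous_ofReal.comp
            (((continuous_const.sub (continuous_subtype_val.comp continuous_snd)).mul
              continuous_fst.norm).add
              ((continuous_subtype_val.comp continuous_snd).mul continuous_const))).mul
            continuous_fst
        · exact (Complex.continuous_ofReal.comp continuous_fst.norm).continuousOn
        · intro p hp
          have : ‖p.1‖ ≠ 0 := ne_of_gt (lt_of_lt_of_le hM hp)
          exact_mod_cast this
      apply ContinuousOn.div
      · exact ((Complex.continuous_ofReal.comp
          ((hf.comp continuous_fst).norm)).continuousOn).mul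
          (hf.comp_continuousOn hρcont)
      · exact Complex.continuous_ofReal.comp_continuousOn
          ((hf.comp_continuousOn hρcont).norm)
      · intro p hp
        have : f (ρ p) ≠ 0 := hfM _ (hρM p hp)
        have h0 : ‖f (ρ p)‖ ≠ 0 := norm_ne_zero_iff.mpr this
        exact_mod_cast h0
  -- the homotopy on the sphere
  set H : OnePoint ℂ × I → OnePoint ℂ := fun p =>
    OnePoint.rec ∞ (fun z => if g z = 0 then ∞
      else ((F (z, p.2) / g z : ℂ) : OnePoint ℂ)) p.1 with hHdef
  have hHcoe : ∀ (z : ℂ) (t : I), H ((z : OnePoint ℂ), t) =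
      if g z = 0 then ∞ else ((F (z, t) / g z : ℂ) : OnePoint ℂ) := fun z t => rfl
  have hHinf : ∀ t : I, H ((∞ : OnePoint ℂ), t) = ∞ := fun t => rfl
  have hHcont : Continuous H := by
    rw [continuous_iff_continuousAt]
    rintro ⟨z, t⟩
    induction z using OnePoint.rec with
    | infty =>
      have hval : H ((∞ : OnePoint ℂ), t) = ∞ := rfl
      rw [ContinuousAt, hval]
      apply aux_tendsto_infty
      intro C
      set C' : ℝ := max C 1 with hC'
      have hC'pos : 0 < C' := lt_of_lt_of_le one_pos (le_max_right _ _)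
      obtain ⟨r, hr, hrC⟩ := hlim C' hC'pos
      have hmem : ((fun w : ℂ => (w : OnePoint ℂ)) '' (Metric.closedBall (0 : ℂ) r)ᶜ ∪ {∞})
          ×ˢ (Set.univ : Set I) ∈ 𝓝 ((∞ : OnePoint ℂ), t) := by
        apply prod_mem_nhds _ Filter.univ_mem
        exact OnePoint.hasBasis_nhds_infty.mem_of_mem
          ⟨Metric.isClosed_closedBall, isCompact_closedBall _ _⟩
      filter_upwards [hmem] with p hp w hw
      obtain ⟨p1, p2⟩ := p
      rcases hp.1 with ⟨v, hv, hvp⟩ | hpi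
      · -- p1 = ↑v with r < ‖v‖
        have hvp' : (v : OnePoint ℂ) = p1 := hvp
        subst hvp'
        have hvr : r ≤ ‖v‖ := by
          simp only [Set.mem_compl_iff, Metric.mem_closedBall, dist_zero_right] at hv
          linarith
        rw [hHcoe v p2] at hw
        by_cases hgv : g v = 0
        · rw [if_pos hgv] at hw
          exact absurd hw (OnePoint.infty_ne_coe w)
        · rw [if_neg hgv] at hw
          have hw' : w = F (v, p2) / g v := by exact_mod_cast hw.symm
          have hg0 : 0 < ‖g v‖ := norm_pos_iff.mpr hgv
          have h1 : C' * ‖g v‖ ≤ ‖f v‖ := hrC v hvr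
          have h2 : ‖w‖ = ‖f v‖ / ‖g v‖ := by
            rw [hw', norm_div, hFnorm]
          have h3 : C' ≤ ‖w‖ := by
            rw [h2, le_div_iff₀ hg0]
            exact h1
          exact le_trans (le_max_left _ _) h3
      · exfalso
        have hp1 : p1 = ∞ := hpi
        subst hp1
        rw [hHinf p2] at hw
        exact (OnePoint.infty_ne_coe w) hw
    | coe z =>
      have he : IsOpenEmbedding (fun q : ℂ × I => ((q.1 : OnePoint ℂ), q.2)) :=
        OnePoint.isOpenEmbedding_coe.prodMap IsOpenEmbedding.id
      have hmap := he.map_nhds_eq (z, t)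
      rw [ContinuousAt]
      have : (((z : OnePoint ℂ), t) : OnePoint ℂ × I) =
          (fun q : ℂ × I => ((q.1 : OnePoint ℂ), q.2)) (z, t) := rfl
      rw [this, ← hmap, Filter.tendsto_map'_iff]
      have hcomp : (H ∘ fun q : ℂ × I => ((q.1 : OnePoint ℂ), q.2)) = fun q : ℂ × I =>
          if g q.1 = 0 then ∞ else ((F q / g q.1 : ℂ) : OnePoint ℂ) := by
        funext q
        simp only [Function.comp_apply, hHcoe]
      rw [hcomp]
      by_cases hgz : g z = 0
      · have hfz : f z ≠ 0 := fun h => hfg z ⟨h, hgz⟩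
        have hval : H ((fun q : ℂ × I => ((q.1 : OnePoint ℂ), q.2)) (z, t)) = ∞ := by
          rw [hHcoe, if_pos hgz]
        rw [hval]
        apply aux_tendsto_infty
        intro C
        set C' : ℝ := max C 1 with hC'
        have hC'pos : 0 < C' := lt_of_lt_of_le one_pos (le_max_right _ _)
        set ε : ℝ := ‖f z‖ with hε
        have hεpos : 0 < ε := norm_pos_iff.mpr hfz
        set δ : ℝ := ε / 2 / C' with hδ
        have hδpos : 0 < δ := by positivity
        have h1 : Tendsto (fun q : ℂ × I => ‖f q.1‖) (𝓝 (z, t)) (𝓝 ε) := by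
          exact ((hf.comp continuous_fst).norm).continuousAt
        have h2 : Tendsto (fun q : ℂ × I => ‖g q.1‖) (𝓝 (z, t)) (𝓝 ‖g z‖) := by
          exact ((hg.comp continuous_fst).norm).continuousAt
        rw [hgz, norm_zero] at h2
        have hev1 : ∀ᶠ q : ℂ × I in 𝓝 (z, t), ε / 2 < ‖f q.1‖ :=
          h1.eventually (eventually_gt_nhds (by linarith))
        have hev2 : ∀ᶠ q : ℂ × I in 𝓝 (z, t), ‖g q.1‖ < δ :=
          h2.eventually (eventually_lt_nhds hδpos)
        filter_upwards [hev1, hev2] with q hq1 hq2 w hw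
        by_cases hgq : g q.1 = 0
        · rw [if_pos hgq] at hw
          exact absurd hw (OnePoint.infty_ne_coe w)
        · rw [if_neg hgq] at hw
          have hw' : w = F q / g q.1 := by exact_mod_cast hw.symm
          have hg0 : 0 < ‖g q.1‖ := norm_pos_iff.mpr hgq
          have h3 : ‖w‖ = ‖f q.1‖ / ‖g q.1‖ := by
            rw [hw', norm_div, hFnorm]
          have h4 : C' * ‖g q.1‖ ≤ ‖f q.1‖ := by
            have : C' * ‖g q.1‖ ≤ C' * δ := by
              exact mul_le_mul_of_nonneg_left hq2.le hC'pos.le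
            have hCδ : C' * δ = ε / 2 := by
              rw [hδ]; field_simp
            linarith
          have h5 : C' ≤ ‖w‖ := by
            rw [h3, le_div_iff₀ hg0]
            exact h4
          exact le_trans (le_max_left _ _) h5
      · have hval : H ((fun q : ℂ × I => ((q.1 : OnePoint ℂ), q.2)) (z, t)) =
            ((F (z, t) / g z : ℂ) : OnePoint ℂ) := by
          rw [hHcoe, if_neg hgz]
        rw [hval]
        have hev : ∀ᶠ q : ℂ × I in 𝓝 (z, t), g q.1 ≠ 0 :=
          (hg.comp continuous_fst).continuousAt.eventually_ne hgz
        have htend : Tendsto (fun q : ℂ × I => ((F q / g q.1 : ℂ) : OnePoint ℂ))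
            (𝓝 (z, t)) (𝓝 ((F (z, t) / g z : ℂ) : OnePoint ℂ)) := by
          apply (OnePoint.continuous_coe.tendsto _).comp
          exact (hFcont.continuousAt).div ((hg.comp continuous_fst).continuousAt) hgz
        apply htend.congr'
        filter_upwards [hev] with q hq
        rw [if_neg hq]
  -- the homotopy connects R and R₁
  have hH0 : ∀ z : OnePoint ℂ, H (z, 0) = R z := by
    intro z
    induction z using OnePoint.rec with
    | infty => rw [hHinf, hRinf]
    | coe z =>
      rw [hHcoe]
      by_cases hgz : g z = 0
      · rw [if_pos hgz, hRb z hgz]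
      · rw [if_neg hgz, hRa z hgz, hF0]
  have hH1 : ∀ z : OnePoint ℂ, H (z, 1) = R₁ z := by
    intro z
    induction z using OnePoint.rec with
    | infty => rw [hHinf, hR₁inf]
    | coe z =>
      rw [hHcoe]
      by_cases hgz : g z = 0
      · rw [if_pos hgz, hR₁b z hgz]
      · rw [if_neg hgz, hR₁a z hgz, hF1]
  have hhom : SphereHomotopic R R₁ := ⟨H, hHcont, hH0, hH1⟩
  refine ⟨?_, ?_, ?_, hhom, ?_⟩
  · have : f₁ = fun z => F (z, 1) := funext fun z => (hF1 z).symm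
    rw [this]
    exact hFcont.comp (continuous_id.prodMk continuous_const)
  · intro z
    rw [← hF1 z, hFnorm]
  · rintro z ⟨h1, h2⟩
    apply hfg z
    refine ⟨?_, h2⟩
    have : ‖f z‖ = 0 := by
      rw [← hFnorm (z, 1), hF1, h1, norm_zero]
    exact norm_eq_zero.mp this
  · intro n
    constructor
    · intro hd
      exact SphereHomotopic.trans (SphereHomotopic.symm hhom) hd
    · intro hd
      exact SphereHomotopic.trans hhom hd
end

section
/- Let p(z) be a nonzero complex polynomial in one variable with no roots on the unit circle. Then the winding number about 0 of the loop α ↦ p(e^{iα}), α ∈ [0, 2π], equals the number of roots of p in the open unit disk, counted with multiplicity. -/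
open Complex

/-- The continuous loop `γ : [0, 2π] → ℂ \ {0}` has winding number `n` about `0`:
there is a continuous choice of argument `θ` along the loop whose total increment
is `2πn` (counterclockwise loops get positive winding numbers). -/
def IsWindingNumber (γ : ℝ → ℂ) (n : ℤ) : Prop :=
  ∃ θ : ℝ → ℝ, ContinuousOn θ (Set.Icc 0 (2 * Real.pi)) ∧
    (∀ t ∈ Set.Icc 0 (2 * Real.pi),
      γ t = (‖γ t‖ : ℂ) * Complex.exp ((θ t : ℂ) * Complex.I)) ∧
    θ (2 * Real.pi) - θ 0 = 2 * Real.pi * (n : ℝ)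

lemma windingNumber_mul {γ₁ γ₂ : ℝ → ℂ} {n m : ℤ}
    (h₁ : IsWindingNumber γ₁ n) (h₂ : IsWindingNumber γ₂ m) :
    IsWindingNumber (fun t => γ₁ t * γ₂ t) (n + m) := by
  obtain ⟨θ₁, hc₁, he₁, hd₁⟩ := h₁
  obtain ⟨θ₂, hc₂, he₂, hd₂⟩ := h₂
  refine ⟨fun t => θ₁ t + θ₂ t, hc₁.add hc₂, fun t ht => ?_, ?_⟩
  · show γ₁ t * γ₂ t = _
    rw [norm_mul]
    conv_lhs => rw [he₁ t ht, he₂ t ht]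
    push_cast
    rw [add_mul, Complex.exp_add]
    ring
  · show θ₁ (2*Real.pi) + θ₂ (2*Real.pi) - (θ₁ 0 + θ₂ 0) = _
    have h : θ₁ (2*Real.pi) + θ₂ (2*Real.pi) - (θ₁ 0 + θ₂ 0)
        = (θ₁ (2*Real.pi) - θ₁ 0) + (θ₂ (2*Real.pi) - θ₂ 0) := by ring
    rw [h, hd₁, hd₂]
    push_cast
    ring

lemma windingNumber_const (c : ℂ) : IsWindingNumber (fun _ => c) 0 := by
  refine ⟨fun _ => Complex.arg c, continuousOn_const, fun t _ => ?_, by simp⟩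
  show c = _
  exact (Complex.norm_mul_exp_arg_mul_I c).symm

lemma windingNumber_sub_inside {z : ℂ} (hz : ‖z‖ < 1) :
    IsWindingNumber (fun α : ℝ => Complex.exp ((α : ℂ) * Complex.I) - z) 1 := by
  set w : ℝ → ℂ := fun α => 1 - z * Complex.exp (-(α : ℂ) * Complex.I) with hwdef
  have hnorm : ∀ α : ℝ, ‖z * Complex.exp (-(α : ℂ) * Complex.I)‖ < 1 := by
    intro α
    have hc : (-(α : ℂ)) = ((-α : ℝ) : ℂ) := by push_cast; ring
    rw [norm_mul, hc,
      Complex.norm_exp_ofReal_mul_I, mul_one]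
    exact hz
  have hre : ∀ α : ℝ, 0 < (w α).re := by
    intro α
    have h1 : (z * Complex.exp (-(α : ℂ) * Complex.I)).re
        ≤ ‖z * Complex.exp (-(α : ℂ) * Complex.I)‖ := Complex.re_le_norm _
    have h2 := hnorm α
    simp only [hwdef, Complex.sub_re, Complex.one_re]
    linarith
  have hwcont : Continuous w := by
    apply Continuous.sub continuous_const
    exact continuous_const.mul
      (Complex.continuous_exp.comp ((Complex.continuous_ofReal.neg).mul continuous_const))
  have hweq : ∀ α : ℝ, Complex.exp ((α : ℂ) * Complex.I) - z
      = Complex.exp ((α : ℂ) * Complex.I) * w α := by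
    intro α
    have h1 : Complex.exp ((α : ℂ) * Complex.I) * Complex.exp (-(α : ℂ) * Complex.I) = 1 := by
      rw [← Complex.exp_add]; ring_nf; exact Complex.exp_zero
    simp only [hwdef, mul_sub, mul_one]
    rw [mul_comm z, ← mul_assoc, h1, one_mul]
  refine ⟨fun α => α + Complex.arg (w α), ?_, fun t _ => ?_, ?_⟩
  · intro t _
    refine ContinuousAt.continuousWithinAt ?_
    exact continuousAt_id.add
      ((Complex.continuousAt_arg (Complex.mem_slitPlane_iff.mpr (Or.inl (hre t)))).comp
        hwcont.continuousAt)
  · beta_reduce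
    show Complex.exp ((t : ℂ) * Complex.I) - z = _
    rw [hweq t, norm_mul]
    have h1 : ‖Complex.exp ((t : ℂ) * Complex.I)‖ = 1 := by
      exact Complex.norm_exp_ofReal_mul_I t
    rw [h1, one_mul]
    push_cast
    rw [add_mul, Complex.exp_add]
    have h2 := Complex.norm_mul_exp_arg_mul_I (w t)
    linear_combination (-(Complex.exp ((t : ℂ) * Complex.I))) * h2
  · show 2 * Real.pi + Complex.arg (w (2 * Real.pi)) - (0 + Complex.arg (w 0)) = _
    have h1 : Complex.exp (-((2 * Real.pi : ℝ) : ℂ) * Complex.I) = 1 := by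
      rw [neg_mul, Complex.exp_neg]
      push_cast
      rw [Complex.exp_two_pi_mul_I]
      simp
    have h0 : Complex.exp (-((0 : ℝ) : ℂ) * Complex.I) = 1 := by simp
    have hww : w (2 * Real.pi) = w 0 := by simp only [hwdef, h1, h0]
    rw [hww]
    push_cast
    ring

lemma windingNumber_sub_outside {z : ℂ} (hz : 1 < ‖z‖) :
    IsWindingNumber (fun α : ℝ => Complex.exp ((α : ℂ) * Complex.I) - z) 0 := by
  have hz0 : z ≠ 0 := by
    intro h; rw [h] at hz; simp at hz; linarith
  set w : ℝ → ℂ := fun α => 1 - Complex.exp ((α : ℂ) * Complex.I) / z with hwdef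
  have hnorm : ∀ α : ℝ, ‖Complex.exp ((α : ℂ) * Complex.I) / z‖ < 1 := by
    intro α
    rw [norm_div, Complex.norm_exp_ofReal_mul_I]
    rw [div_lt_one (by linarith)]
    exact hz
  have hre : ∀ α : ℝ, 0 < (w α).re := by
    intro α
    have h1 : (Complex.exp ((α : ℂ) * Complex.I) / z).re
        ≤ ‖Complex.exp ((α : ℂ) * Complex.I) / z‖ := Complex.re_le_norm _
    have h2 := hnorm α
    simp only [hwdef, Complex.sub_re, Complex.one_re]
    linarith
  have hwcont : Continuous w := by
    apply Continuous.sub continuous_const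
    exact (Complex.continuous_exp.comp (Complex.continuous_ofReal.mul continuous_const)).div_const _
  have hweq : ∀ α : ℝ, Complex.exp ((α : ℂ) * Complex.I) - z = (-z) * w α := by
    intro α
    simp only [hwdef]
    linear_combination (-Complex.exp ((α : ℂ) * Complex.I)) * div_self hz0
  refine ⟨fun α => Complex.arg (-z) + Complex.arg (w α), ?_, fun t _ => ?_, ?_⟩
  · intro t _
    refine ContinuousAt.continuousWithinAt ?_
    exact continuousAt_const.add
      ((Complex.continuousAt_arg (Complex.mem_slitPlane_iff.mpr (Or.inl (hre t)))).comp
        hwcont.continuousAt)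
  · beta_reduce
    show Complex.exp ((t : ℂ) * Complex.I) - z = _
    rw [hweq t, norm_mul]
    push_cast
    rw [add_mul, Complex.exp_add]
    have h1 := Complex.norm_mul_exp_arg_mul_I (-z)
    have h2 := Complex.norm_mul_exp_arg_mul_I (w t)
    linear_combination (-(↑‖w t‖ * Complex.exp ((Complex.arg (w t) : ℂ) * Complex.I))) * h1
      + z * h2
  · show Complex.arg (-z) + Complex.arg (w (2 * Real.pi))
        - (Complex.arg (-z) + Complex.arg (w 0)) = _
    have h1 : Complex.exp (((2 * Real.pi : ℝ) : ℂ) * Complex.I) = 1 := by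
      push_cast
      exact Complex.exp_two_pi_mul_I
    have h0 : Complex.exp (((0 : ℝ) : ℂ) * Complex.I) = 1 := by simp
    have hww : w (2 * Real.pi) = w 0 := by simp only [hwdef, h1, h0]
    rw [hww]
    push_cast
    ring

lemma windingNumber_prod (s : Multiset ℂ) (hs : ∀ z ∈ s, ‖z‖ ≠ 1) :
    IsWindingNumber
      (fun α : ℝ => (s.map (fun z => Complex.exp ((α : ℂ) * Complex.I) - z)).prod)
      ((s.filter fun z => ‖z‖ < 1).card : ℤ) := by
  induction s using Multiset.induction with
  | empty => simpa using windingNumber_const 1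
  | cons z s ih =>
    have hzs : ∀ y ∈ s, ‖y‖ ≠ 1 := fun y hy => hs y (Multiset.mem_cons_of_mem hy)
    have hw := ih hzs
    simp only [Multiset.map_cons, Multiset.prod_cons, Multiset.filter_cons]
    by_cases h : ‖z‖ < 1
    · have key := windingNumber_mul (windingNumber_sub_inside h) hw
      simp only [h, if_pos, Multiset.card_add, Multiset.card_singleton]
      have : ((1 + Multiset.card (Multiset.filter (fun z => ‖z‖ < 1) s) : ℕ) : ℤ)
          = 1 + (Multiset.card (Multiset.filter (fun z => ‖z‖ < 1) s) : ℤ) := by push_cast; ring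
      rw [this]
      exact key
    · have h1 : 1 < ‖z‖ :=
        lt_of_le_of_ne (not_lt.1 h) (Ne.symm (hs z (Multiset.mem_cons_self z s)))
      have key := windingNumber_mul (windingNumber_sub_outside h1) hw
      simp only [h, if_neg, not_false_iff, zero_add, Multiset.card_add]
      simpa using key

/-- **Argument principle for polynomials.**  Let `p` be a nonzero complex polynomial
with no roots on the unit circle.  Then the winding number about `0` of the loop
`α ↦ p(e^{iα})`, `α ∈ [0,2π]`, equals the number of roots of `p` in the open unit
disk, counted with multiplicity. -/
theorem winding_number_eq_card_roots_in_unit_disk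
    (p : Polynomial ℂ) (hp : p ≠ 0)
    (hcirc : ∀ z : ℂ, ‖z‖ = 1 → p.eval z ≠ 0) :
    IsWindingNumber (fun α : ℝ => p.eval (Complex.exp ((α : ℂ) * Complex.I)))
      ((p.roots.filter fun z => ‖z‖ < 1).card : ℤ) := by
  have hsplit : p = Polynomial.C p.leadingCoeff
      * (p.roots.map fun a => Polynomial.X - Polynomial.C a).prod :=
    Polynomial.Splits.eq_prod_roots (IsAlgClosed.splits p)
  have hroots : ∀ z ∈ p.roots, ‖z‖ ≠ 1 := by
    intro z hz h1
    exact hcirc z h1 ((Polynomial.isRoot_of_mem_roots hz))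
  have heval : ∀ α : ℝ, p.eval (Complex.exp ((α : ℂ) * Complex.I)) =
      p.leadingCoeff
        * ((p.roots.map fun z => Complex.exp ((α : ℂ) * Complex.I) - z)).prod := by
    intro α
    conv_lhs => rw [hsplit]
    simp [Polynomial.eval_multiset_prod, Multiset.map_map, Function.comp]
  have hfun : (fun α : ℝ => p.eval (Complex.exp ((α : ℂ) * Complex.I)))
      = fun t : ℝ => p.leadingCoeff
        * ((p.roots.map fun z => Complex.exp ((t : ℂ) * Complex.I) - z)).prod :=
    funext heval
  rw [hfun]
  have key := windingNumber_mul (windingNumber_const p.leadingCoeff)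
    (windingNumber_prod p.roots hroots)
  simpa using key
end
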